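/- arXiv:2512.07746 — 4 statements merged into one kernel-verified Lean document; each statement's English description precedes it below -/
import Mathlib

section
/- Let Γ ∈ [1727/1728, 1), R = 2(1-Γ)^{1/3}, and h_c(z) = z(1 - Γ/(1-z)). Then for every z with |z| ≤ R and every k ∈ ℕ, the k-th iterate satisfies |h_c^k(z)| ≤ 2^{-k}|z|, and consequently the series ψ̃(z) = Σ_{k≥0} h_c^k(z) converges absolutely and uniformly on {|z| < R} and defines a holomorphic function. -/
noncomputable section
/-- The complex map h_c. -/
def hc (Γ : ℝ) (z : ℂ) : ℂ := z * (1 - (Γ : ℂ) / (1 - z))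

/-!
Writing `h_c(z) = z ((1 - Γ) - z) / (1 - z)` gives `|h_c(z)| ≤ |z| ((1 - Γ) + |z|) / (1 - |z|)`,
and this ratio is at most `1/2` as soon as `3|z| + 2(1 - Γ) ≤ 1`, which holds for `|z| ≤ R` because
`R ≤ 1/6` and `1 - Γ ≤ 1/1728`. So `h_c` halves norms there, the iterates decay geometrically, and the
Weierstrass M-test gives uniform convergence and holomorphy of `Σ h_c^k`.
-/

open Function

theorem norm_iterate_le_pow_mul {E : Type*} [SeminormedAddCommGroup E] {f : E → E} {c r : ℝ}
    (hc₀ : 0 ≤ c) (hc₁ : c ≤ 1) (hf : ∀ z, ‖z‖ ≤ r → ‖f z‖ ≤ c * ‖z‖) :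
    ∀ (k : ℕ) {z : E}, ‖z‖ ≤ r → ‖f^[k] z‖ ≤ c ^ k * ‖z‖
  | 0, z, _ => by simp
  | k + 1, z, hz => by
    have hfz : ‖f z‖ ≤ c * ‖z‖ := hf z hz
    have hfz_r : ‖f z‖ ≤ r := hfz.trans <| (mul_le_of_le_one_left (norm_nonneg z) hc₁).trans hz
    calc ‖f^[k + 1] z‖ = ‖f^[k] (f z)‖ := by rw [iterate_succ_apply]
      _ ≤ c ^ k * ‖f z‖ := norm_iterate_le_pow_mul hc₀ hc₁ hf k hfz_r
      _ ≤ c ^ k * (c * ‖z‖) := by gcongr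
      _ = c ^ (k + 1) * ‖z‖ := by ring

theorem hc_eq (Γ : ℝ) {z : ℂ} (hz : z ≠ 1) : hc Γ z = z * (((1 - Γ : ℝ) : ℂ) - z) / (1 - z) := by
  have hz' : (1 : ℂ) - z ≠ 0 := sub_ne_zero.mpr hz.symm
  rw [hc]
  field_simp
  push_cast
  ring

theorem norm_hc_le {Γ : ℝ} (hΓ : Γ ≤ 1) {z : ℂ} (hz : ‖z‖ < 1) :
    ‖hc Γ z‖ ≤ ‖z‖ * ((1 - Γ) + ‖z‖) / (1 - ‖z‖) := by
  have hz1 : z ≠ 1 := by rintro rfl; simp at hz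
  have hnum : ‖((1 - Γ : ℝ) : ℂ) - z‖ ≤ (1 - Γ) + ‖z‖ := by
    refine (norm_sub_le _ _).trans_eq ?_
    rw [Complex.norm_real, Real.norm_of_nonneg (by linarith)]
  have hden : 1 - ‖z‖ ≤ ‖(1 : ℂ) - z‖ := by simpa using norm_sub_norm_le (1 : ℂ) z
  rw [hc_eq Γ hz1, norm_div, norm_mul]
  gcongr

theorem norm_hc_le_half {Γ : ℝ} (hΓ : Γ ≤ 1) {z : ℂ} (hz : 3 * ‖z‖ + 2 * (1 - Γ) ≤ 1) :
    ‖hc Γ z‖ ≤ 2⁻¹ * ‖z‖ := by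
  have hz1 : ‖z‖ < 1 := by linarith
  refine (norm_hc_le hΓ hz1).trans ?_
  rw [div_le_iff₀ (by linarith)]
  nlinarith [norm_nonneg z]

theorem differentiableAt_hc (Γ : ℝ) {z : ℂ} (hz : z ≠ 1) : DifferentiableAt ℂ (hc Γ) z := by
  have hz' : (1 : ℂ) - z ≠ 0 := sub_ne_zero.mpr hz.symm
  unfold hc
  fun_prop (disch := exact hz')

theorem two_mul_one_sub_rpow_third_le {Γ : ℝ} (hΓ₀ : 1727 / 1728 ≤ Γ) (hΓ₁ : Γ ≤ 1) :
    2 * (1 - Γ) ^ ((1 : ℝ) / 3) ≤ 1 / 6 := by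
  have h : (1 - Γ) ^ ((1 : ℝ) / 3) ≤ ((1 / 12 : ℝ) ^ 3) ^ ((3 : ℕ)⁻¹ : ℝ) := by
    rw [one_div, ← Nat.cast_ofNat (R := ℝ) (n := 3)]
    gcongr
    linarith
  rw [Real.pow_rpow_inv_natCast (by norm_num) (by norm_num)] at h
  linarith

theorem stmt7 (Γ : ℝ) (hΓ : Γ ∈ Set.Ico (1727 / 1728 : ℝ) 1)
    (R : ℝ) (hR : R = 2 * (1 - Γ) ^ ((1 : ℝ) / 3)) :
    (∀ z : ℂ, ‖z‖ ≤ R → ∀ k : ℕ, ‖(hc Γ)^[k] z‖ ≤ (2 : ℝ)⁻¹ ^ k * ‖z‖) ∧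
    (∀ z : ℂ, ‖z‖ < R → Summable fun k : ℕ => ‖(hc Γ)^[k] z‖) ∧
    TendstoUniformlyOn (fun n (z : ℂ) => ∑ k ∈ Finset.range n, (hc Γ)^[k] z)
      (fun z => ∑' k : ℕ, (hc Γ)^[k] z) Filter.atTop {z : ℂ | ‖z‖ < R} ∧
    DifferentiableOn ℂ (fun z => ∑' k : ℕ, (hc Γ)^[k] z) {z : ℂ | ‖z‖ < R} := by
  obtain ⟨hΓ₀, hΓ₁⟩ := hΓ
  have hR6 : R ≤ 1 / 6 := hR ▸ two_mul_one_sub_rpow_third_le hΓ₀ hΓ₁.le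
  have halve : ∀ z : ℂ, ‖z‖ ≤ R → ‖hc Γ z‖ ≤ 2⁻¹ * ‖z‖ :=
    fun z hz => norm_hc_le_half hΓ₁.le (by linarith)
  have iter : ∀ z : ℂ, ‖z‖ ≤ R → ∀ k : ℕ, ‖(hc Γ)^[k] z‖ ≤ (2 : ℝ)⁻¹ ^ k * ‖z‖ :=
    fun z hz k => norm_iterate_le_pow_mul (by norm_num) (by norm_num) halve k hz
  have geom : Summable fun k : ℕ => (2 : ℝ)⁻¹ ^ k * R :=
    (summable_geometric_of_lt_one (by norm_num) (by norm_num)).mul_right R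
  have bound : ∀ k, ∀ z ∈ {z : ℂ | ‖z‖ < R}, ‖(hc Γ)^[k] z‖ ≤ (2 : ℝ)⁻¹ ^ k * R :=
    fun k z hz => (iter z (le_of_lt hz) k).trans (by gcongr; exact le_of_lt hz)
  have maps : Set.MapsTo (hc Γ) {z : ℂ | ‖z‖ < R} {z : ℂ | ‖z‖ < R} := fun z (hz : ‖z‖ < R) =>
    show ‖hc Γ z‖ < R by linarith [halve z hz.le, norm_nonneg z]
  have diff : DifferentiableOn ℂ (hc Γ) {z : ℂ | ‖z‖ < R} := fun z (hz : ‖z‖ < R) =>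
    (differentiableAt_hc Γ (by rintro rfl; norm_num at hz; linarith)).differentiableWithinAt
  refine ⟨iter, fun z hz => ?_, tendstoUniformlyOn_tsum_nat geom bound,
    Complex.differentiableOn_tsum_of_summable_norm geom (diff.iterate maps)
      (isOpen_lt continuous_norm continuous_const) bound⟩
  exact .of_nonneg_of_le (fun k => norm_nonneg _) (iter z hz.le)
    ((summable_geometric_of_lt_one (by norm_num) (by norm_num)).mul_right ‖z‖)
end
end

section
/- Let Γ ∈ [1727/1728, 1), R = 2(1-Γ)^{1/3}, and ψ̃(z) = Σ_{k≥0} h_c^k(z) on {|z| < R} with h_c(z) = z(1 - Γ/(1-z)). Then sup_{|z|<R} |ψ̃(z)| ≤ 4(1-Γ)^{1/3}, sup_{|z|≤1-Γ} |ψ̃'(z)| ≤ 16, and sup_{|z|≤1-Γ} |ψ̃''(z)| ≤ 64/(1-Γ)^{1/3}. -/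
noncomputable section
/-- The series ψ̃. -/
def psit (Γ : ℝ) (z : ℂ) : ℂ := ∑' k : ℕ, (hc Γ)^[k] z

theorem stmt10 (Γ : ℝ) (hΓ : Γ ∈ Set.Ico (1727 / 1728 : ℝ) 1)
    (R : ℝ) (hR : R = 2 * (1 - Γ) ^ ((1 : ℝ) / 3)) :
    (∀ z : ℂ, ‖z‖ < R → ‖psit Γ z‖ ≤ 4 * (1 - Γ) ^ ((1 : ℝ) / 3)) ∧
    (∀ z : ℂ, ‖z‖ ≤ 1 - Γ → ‖deriv (psit Γ) z‖ ≤ 16) ∧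
    (∀ z : ℂ, ‖z‖ ≤ 1 - Γ →
      ‖deriv (deriv (psit Γ)) z‖ ≤ 64 / (1 - Γ) ^ ((1 : ℝ) / 3)) := by
  obtain ⟨hΓ1, hΓ2⟩ := hΓ
  set ε : ℝ := 1 - Γ with hεdef
  have hε0 : 0 < ε := by simp [hεdef]; linarith
  have hε1 : ε ≤ 1 / 1728 := by simp [hεdef]; linarith
  set r : ℝ := ε ^ ((1 : ℝ) / 3) with hrdef
  have hr0 : 0 < r := Real.rpow_pos_of_pos hε0 _
  have hr3 : r ^ (3 : ℕ) = ε := by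
    rw [hrdef, ← Real.rpow_natCast (ε ^ ((1:ℝ)/3)) 3, ← Real.rpow_mul hε0.le]
    norm_num
  have hr12 : r ≤ 1 / 12 := by nlinarith [sq_nonneg (r + 1/12), sq_nonneg r, hr0.le]
  have hεr : ε ≤ r / 144 := by
    have hr2 : r ^ 2 ≤ 1 / 144 := by nlinarith
    have h3 : ε = r * r ^ 2 := by rw [← hr3]; ring
    rw [h3]; nlinarith
  -- key contraction estimate
  have hhalf : ∀ z : ℂ, ‖z‖ ≤ 2 * r → ‖hc Γ z‖ ≤ ‖z‖ / 2 := by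
    intro z hz
    have hz16 : ‖z‖ ≤ 1 / 6 := by linarith
    have h1z : (5 : ℝ) / 6 ≤ ‖(1 : ℂ) - z‖ := by
      have := norm_sub_norm_le (1 : ℂ) z
      simp only [norm_one] at this
      linarith
    have hz1 : (1 : ℂ) - z ≠ 0 := by
      intro h; rw [h] at h1z; simp at h1z; linarith
    have heq2 : (1:ℂ) - (Γ:ℂ)/(1-z) = ((1:ℂ) - (Γ:ℂ) - z)/(1-z) := by
      rw [eq_div_iff hz1, sub_mul, div_mul_cancel₀ _ hz1]
      ring
    have heq : hc Γ z = z * (((1 : ℂ) - (Γ:ℂ) - z) / (1 - z)) := by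
      unfold hc
      rw [heq2]
    have hnum : ‖(1 : ℂ) - (Γ:ℂ) - z‖ ≤ 5 / 12 := by
      have h2 : (1 : ℂ) - (Γ:ℂ) - z = ((ε : ℝ) : ℂ) - z := by
        push_cast [hεdef]; ring
      rw [h2]
      calc ‖((ε : ℝ) : ℂ) - z‖ ≤ ‖((ε : ℝ) : ℂ)‖ + ‖z‖ := norm_sub_le _ _
        _ ≤ ε + 1/6 := by
            simp only [Complex.norm_real, Real.norm_eq_abs, abs_of_pos hε0]
            linarith
        _ ≤ 5 / 12 := by linarith
    rw [heq, norm_mul, norm_div]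
    have hfrac : ‖(1 : ℂ) - (Γ:ℂ) - z‖ / ‖(1 : ℂ) - z‖ ≤ 1/2 := by
      rw [div_le_iff₀ (by linarith)]
      linarith
    calc ‖z‖ * (‖(1 : ℂ) - (Γ:ℂ) - z‖ / ‖(1 : ℂ) - z‖)
        ≤ ‖z‖ * (1/2) := by
          apply mul_le_mul_of_nonneg_left hfrac (norm_nonneg z)
        _ = ‖z‖ / 2 := by ring
  -- iterate bound
  have hiter : ∀ (k : ℕ) (z : ℂ), ‖z‖ ≤ 2 * r →
      ‖(hc Γ)^[k] z‖ ≤ (1/2 : ℝ) ^ k * ‖z‖ := by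
    intro k
    induction k with
    | zero => intro z hz; simp
    | succ n ih =>
      intro z hz
      rw [Function.iterate_succ_apply]
      have h1 : ‖hc Γ z‖ ≤ ‖z‖ / 2 := hhalf z hz
      have h2 : ‖hc Γ z‖ ≤ 2 * r := by linarith
      calc ‖(hc Γ)^[n] (hc Γ z)‖ ≤ (1/2:ℝ)^n * ‖hc Γ z‖ := ih _ h2
        _ ≤ (1/2:ℝ)^n * (‖z‖ / 2) := by
            gcongr
        _ = (1/2:ℝ)^(n+1) * ‖z‖ := by ring
  have hgeo : Summable (fun k : ℕ => (1/2 : ℝ) ^ k) :=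
    summable_geometric_of_lt_one (by norm_num) (by norm_num)
  -- sum bound
  have hsum : ∀ z : ℂ, ‖z‖ ≤ 2 * r → ‖psit Γ z‖ ≤ 2 * ‖z‖ := by
    intro z hz
    have hsn : Summable (fun k : ℕ => ‖(hc Γ)^[k] z‖) :=
      Summable.of_nonneg_of_le (fun k => norm_nonneg _)
        (fun k => hiter k z hz) (hgeo.mul_right _)
    calc ‖psit Γ z‖ ≤ ∑' k : ℕ, ‖(hc Γ)^[k] z‖ := norm_tsum_le_tsum_norm hsn
      _ ≤ ∑' k : ℕ, (1/2 : ℝ)^k * ‖z‖ :=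
          Summable.tsum_le_tsum (fun k => hiter k z hz) hsn (hgeo.mul_right _)
      _ = (∑' k : ℕ, (1/2 : ℝ)^k) * ‖z‖ := tsum_mul_right
      _ = 2 * ‖z‖ := by
          rw [tsum_geometric_of_lt_one (by norm_num) (by norm_num)]; norm_num
  -- differentiability of iterates on the ball
  have hdiffk : ∀ k : ℕ,
      DifferentiableOn ℂ (fun z => (hc Γ)^[k] z) (Metric.ball 0 (2 * r)) := by
    intro k
    induction k with
    | zero => exact differentiableOn_id
    | succ n ih =>
      have : (fun z => (hc Γ)^[n+1] z) = fun z => hc Γ ((hc Γ)^[n] z) := by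
        funext z; rw [Function.iterate_succ_apply']
      rw [this]
      intro z hz
      have hzn : ‖z‖ ≤ 2 * r := by
        have := Metric.mem_ball.mp hz
        simp only [dist_zero_right] at this
        linarith
      have hpow : (1/2:ℝ)^n ≤ 1 := pow_le_one₀ (by norm_num) (by norm_num)
      have hw : ‖(hc Γ)^[n] z‖ ≤ 2 * r := (hiter n z hzn).trans
        (by nlinarith [norm_nonneg z])
      have hw1 : (1 : ℂ) - (hc Γ)^[n] z ≠ 0 := by
        intro h
        have : (1 : ℂ) = (hc Γ)^[n] z := by linear_combination h
        rw [← this] at hw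
        simp at hw
        linarith
      have hdhc : DifferentiableAt ℂ (hc Γ) ((hc Γ)^[n] z) := by
        unfold hc
        exact differentiableAt_id.mul
          ((differentiableAt_const _).sub
            ((differentiableAt_const _).div
              ((differentiableAt_const _).sub differentiableAt_id) hw1))
      exact hdhc.comp_differentiableWithinAt _ (ih z hz)
  -- differentiability of psit
  have hpsiDiff : DifferentiableOn ℂ (psit Γ) (Metric.ball 0 (2 * r)) := by
    have : psit Γ = fun z => ∑' k : ℕ, (fun (k : ℕ) (z : ℂ) => (hc Γ)^[k] z) k z := rfl
    rw [this]
    apply Complex.differentiableOn_tsum_of_summable_norm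
      (u := fun k : ℕ => (1/2 : ℝ)^k * (2 * r)) (hgeo.mul_right _)
      hdiffk Metric.isOpen_ball
    intro k w hw
    have hwn : ‖w‖ ≤ 2 * r := by
      have := Metric.mem_ball.mp hw
      simp only [dist_zero_right] at this
      linarith
    calc ‖(hc Γ)^[k] w‖ ≤ (1/2:ℝ)^k * ‖w‖ := hiter k w hwn
      _ ≤ (1/2:ℝ)^k * (2 * r) := by gcongr
  have hderivDiff : DifferentiableOn ℂ (deriv (psit Γ)) (Metric.ball 0 (2 * r)) :=
    ((hpsiDiff.analyticOnNhd Metric.isOpen_ball).deriv).differentiableOn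
  -- first derivative bound on ‖w‖ ≤ r
  have hd1 : ∀ w : ℂ, ‖w‖ ≤ r → ‖deriv (psit Γ) w‖ ≤ 10 := by
    intro w hw
    have hsub : Metric.ball w (r/2) ⊆ Metric.ball 0 (2 * r) := by
      intro x hx
      rw [Metric.mem_ball] at hx ⊢
      simp only [dist_zero_right]
      calc ‖x‖ ≤ ‖x - w‖ + ‖w‖ := by
            simpa using norm_add_le (x - w) w
        _ < r/2 + r := by rw [← dist_eq_norm] at *; linarith
        _ ≤ 2 * r := by linarith
    have hmaps : Set.MapsTo (psit Γ) (Metric.ball w (r/2))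
        (Metric.ball (psit Γ w) (5 * r)) := by
      intro x hx
      rw [Metric.mem_ball] at hx ⊢
      have hxn : ‖x‖ < 3 * r / 2 := by
        calc ‖x‖ ≤ ‖x - w‖ + ‖w‖ := by simpa using norm_add_le (x - w) w
          _ < r/2 + r := by rw [← dist_eq_norm] at *; linarith
          _ = 3 * r / 2 := by ring
      have h1 : ‖psit Γ x‖ ≤ 2 * ‖x‖ := hsum x (by linarith)
      have h2 : ‖psit Γ w‖ ≤ 2 * ‖w‖ := hsum w (by linarith)
      calc dist (psit Γ x) (psit Γ w) ≤ ‖psit Γ x‖ + ‖psit Γ w‖ := by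
            rw [dist_eq_norm]; exact norm_sub_le _ _
        _ < 5 * r := by linarith
    have := Complex.norm_deriv_le_div_of_mapsTo_ball
      (hpsiDiff.mono hsub) (hmaps.mono_right Metric.ball_subset_closedBall) (by linarith : (0:ℝ) < r/2)
    calc ‖deriv (psit Γ) w‖ ≤ 5 * r / (r/2) := this
      _ = 10 := by field_simp; ring
  have hεltr : ε ≤ r := by linarith
  refine ⟨?_, ?_, ?_⟩
  · -- sup bound
    intro z hz
    rw [hR] at hz
    have h1 : ‖psit Γ z‖ ≤ 2 * ‖z‖ := hsum z (le_of_lt hz)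
    calc ‖psit Γ z‖ ≤ 2 * ‖z‖ := h1
      _ ≤ 4 * (1 - Γ) ^ ((1:ℝ)/3) := by
        show 2 * ‖z‖ ≤ 4 * r
        linarith
  · -- first derivative
    intro z hz
    have : ‖deriv (psit Γ) z‖ ≤ 10 := hd1 z (le_trans hz hεltr)
    linarith
  · -- second derivative
    intro z hz
    have hzr : ‖z‖ ≤ ε := hz
    have hsub : Metric.ball z (r/2) ⊆ Metric.ball 0 (2 * r) := by
      intro x hx
      rw [Metric.mem_ball] at hx ⊢
      simp only [dist_zero_right]
      calc ‖x‖ ≤ ‖x - z‖ + ‖z‖ := by simpa using norm_add_le (x - z) z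
        _ < r/2 + ε := by rw [← dist_eq_norm] at *; linarith
        _ ≤ 2 * r := by linarith
    have hmaps : Set.MapsTo (deriv (psit Γ)) (Metric.ball z (r/2))
        (Metric.ball (deriv (psit Γ) z) 21) := by
      intro x hx
      rw [Metric.mem_ball] at hx ⊢
      have hxn : ‖x‖ ≤ r := by
        calc ‖x‖ ≤ ‖x - z‖ + ‖z‖ := by simpa using norm_add_le (x - z) z
          _ ≤ r/2 + ε := by rw [← dist_eq_norm] at *; linarith
          _ ≤ r := by linarith
      have h1 : ‖deriv (psit Γ) x‖ ≤ 10 := hd1 x hxn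
      have h2 : ‖deriv (psit Γ) z‖ ≤ 10 := hd1 z (le_trans hz hεltr)
      calc dist (deriv (psit Γ) x) (deriv (psit Γ) z)
          ≤ ‖deriv (psit Γ) x‖ + ‖deriv (psit Γ) z‖ := by
            rw [dist_eq_norm]; exact norm_sub_le _ _
        _ < 21 := by linarith
    have hS := Complex.norm_deriv_le_div_of_mapsTo_ball
      (hderivDiff.mono hsub) (hmaps.mono_right Metric.ball_subset_closedBall) (by linarith : (0:ℝ) < r/2)
    calc ‖deriv (deriv (psit Γ)) z‖ ≤ 21 / (r/2) := hS
      _ = 42 / r := by field_simp; ring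
      _ ≤ 64 / (1 - Γ) ^ ((1:ℝ)/3) := by
        show (42:ℝ) / r ≤ 64 / r
        gcongr
        norm_num
end
end

section
/- Let Γ ∈ [1727/1728, 1), let h: [0,1] → ℝ be defined by h(s) = s(1 - Γ/(1-s)) for s ∈ [0,1-Γ] and h(s) = 0 for s ∈ [1-Γ,1], and let ψ: [0,1] → ℝ be defined by ψ(s) = Σ_{k≥0} h_c^k(s) for s ∈ [0,1-Γ] (where h_c(z) = z(1-Γ/(1-z))) and ψ(s) = s for s ∈ [1-Γ,1]. Then ψ is continuous on [0,1], Lipschitz continuous, and satisfies ψ(s) - ψ(h(s)) = s for all s ∈ [0,1]. -/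
/-!
On `[0, 1-Γ]` the map `h_c` sends `s` into `[0, (1-Γ) s]`, so the series `Σ h_c^k(s)` converges
geometrically, and peeling off its first term gives `ψ(s) = s + ψ(h_c s)`; as `h_c(1-Γ) = 0`, the
series equals `1-Γ` at the junction. For `Γ > 1/2` the identity
`h_c s - h_c t = (s - t)(1 - Γ/((1-s)(1-t)))` makes `h_c` a contraction of `[0, 1-Γ]` with constant
`Γ⁻¹ - 1`, so the iterates have summable Lipschitz constants `(Γ⁻¹ - 1)^k` and the series is
Lipschitz; gluing it to the identity on `[1-Γ, 1]` gives the Lipschitz bound for `ψ`.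
-/

noncomputable section
/-- The real map h_c. -/
def hcR (Γ : ℝ) (s : ℝ) : ℝ := s * (1 - Γ / (1 - s))
/-- The piecewise map h: equal to h_c on [0, 1-Γ] and 0 on [1-Γ, 1]. -/
def hpw (Γ : ℝ) (s : ℝ) : ℝ := if s ≤ 1 - Γ then hcR Γ s else 0
/-- The piecewise function ψ: the series Σ h_c^k(s) on [0, 1-Γ] and s on [1-Γ, 1]. -/
def psiR (Γ : ℝ) (s : ℝ) : ℝ := if s ≤ 1 - Γ then ∑' k : ℕ, (hcR Γ)^[k] s else s

open Set Function NNReal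

lemma LipschitzOnWith.iterate_of_mapsTo {α : Type*} [PseudoEMetricSpace α] {f : α → α}
    {s : Set α} {K : ℝ≥0} (hf : LipschitzOnWith K f s) (hs : MapsTo f s s) :
    ∀ n : ℕ, LipschitzOnWith (K ^ n) f^[n] s
  | 0 => by simpa using LipschitzWith.id.lipschitzOnWith
  | n + 1 => by
    rw [pow_succ, iterate_succ]
    exact (hf.iterate_of_mapsTo hs n).comp hf hs

lemma LipschitzOnWith.tsum {ι α E : Type*} [PseudoMetricSpace α] [NormedAddCommGroup E]
    {f : ι → α → E} {s : Set α} {K : ι → ℝ≥0} (hf : ∀ i, LipschitzOnWith (K i) (f i) s)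
    (hK : Summable K) (hsum : ∀ x ∈ s, Summable fun i => f i x) :
    LipschitzOnWith (∑' i, K i) (fun x => ∑' i, f i x) s := by
  refine LipschitzOnWith.of_dist_le_mul fun x hx y hy => ?_
  rw [dist_eq_norm, ← (hsum x hx).tsum_sub (hsum y hy)]
  refine tsum_of_norm_bounded ((NNReal.hasSum_coe.mpr hK.hasSum).mul_right (dist x y)) fun i => ?_
  rw [← dist_eq_norm]
  exact (hf i).dist_le_mul x hx y hy

lemma LipschitzOnWith.Icc_union_Icc {E : Type*} [PseudoMetricSpace E] {f : ℝ → E} {a b c : ℝ}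
    {K : ℝ≥0} (hab : LipschitzOnWith K f (Icc a b)) (hbc : LipschitzOnWith K f (Icc b c))
    (ha : a ≤ b) (hc : b ≤ c) : LipschitzOnWith K f (Icc a c) := by
  have key : ∀ x ∈ Icc a c, ∀ y ∈ Icc a c, x ≤ y → dist (f x) (f y) ≤ K * dist x y := by
    intro x hx y hy hxy
    rcases le_total y b with hyb | hby
    · exact hab.dist_le_mul x ⟨hx.1, hxy.trans hyb⟩ y ⟨hy.1, hyb⟩
    rcases le_total b x with hbx | hxb
    · exact hbc.dist_le_mul x ⟨hbx, hx.2⟩ y ⟨hby, hy.2⟩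
    calc dist (f x) (f y) ≤ dist (f x) (f b) + dist (f b) (f y) := dist_triangle _ _ _
      _ ≤ K * dist x b + K * dist b y := add_le_add
          (hab.dist_le_mul x ⟨hx.1, hxb⟩ b ⟨ha, le_rfl⟩) (hbc.dist_le_mul b ⟨le_rfl, hc⟩ y ⟨hby, hy.2⟩)
      _ = K * dist x y := by
          simp only [Real.dist_eq, abs_of_nonpos (sub_nonpos.mpr hxb),
            abs_of_nonpos (sub_nonpos.mpr hby), abs_of_nonpos (sub_nonpos.mpr hxy)]
          ring
  refine LipschitzOnWith.of_dist_le_mul fun x hx y hy => ?_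
  rcases le_total x y with hxy | hyx
  · exact key x hx y hy hxy
  · rw [dist_comm, dist_comm x]
    exact key y hy x hx hyx

section

variable {Γ s : ℝ}

lemma hcR_zero (Γ : ℝ) : hcR Γ 0 = 0 := by simp [hcR]

lemma iterate_hcR_zero (Γ : ℝ) (k : ℕ) : (hcR Γ)^[k] 0 = 0 :=
  iterate_fixed (hcR_zero Γ) k

lemma hcR_one_sub_self (hΓ : Γ ≠ 0) : hcR Γ (1 - Γ) = 0 := by
  simp [hcR, hΓ]

lemma hcR_mem_Icc (hΓ : 0 < Γ) (hs : s ∈ Icc 0 (1 - Γ)) : hcR Γ s ∈ Icc 0 ((1 - Γ) * s) := by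
  obtain ⟨hs0, hs1⟩ := hs
  have h1s : 0 < 1 - s := by linarith
  have hlow : Γ ≤ Γ / (1 - s) := le_div_self hΓ.le h1s (by linarith)
  have hup : Γ / (1 - s) ≤ 1 := (div_le_one h1s).mpr (by linarith)
  constructor <;> unfold hcR <;> nlinarith

lemma mapsTo_hcR (hΓ : 0 < Γ) : MapsTo (hcR Γ) (Icc 0 (1 - Γ)) (Icc 0 (1 - Γ)) := fun s hs => by
  obtain ⟨h0, h1⟩ := hcR_mem_Icc hΓ hs
  exact ⟨h0, h1.trans (by nlinarith [hs.1, hs.2])⟩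

lemma iterate_hcR_mem_Icc (hΓ : 0 < Γ) (hs : s ∈ Icc 0 (1 - Γ)) (k : ℕ) :
    (hcR Γ)^[k] s ∈ Icc 0 ((1 - Γ) ^ k * s) := by
  induction k with
  | zero => simpa using hs.1
  | succ k ih =>
    rw [iterate_succ_apply']
    obtain ⟨h0, h1⟩ := hcR_mem_Icc hΓ ((mapsTo_hcR hΓ).iterate k hs)
    exact ⟨h0, h1.trans (by
      rw [pow_succ', mul_assoc]; exact mul_le_mul_of_nonneg_left ih.2 (hs.1.trans hs.2))⟩

lemma summable_iterate_hcR (hΓ : 0 < Γ) (hs : s ∈ Icc 0 (1 - Γ)) :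
    Summable fun k => (hcR Γ)^[k] s :=
  Summable.of_nonneg_of_le (fun k => (iterate_hcR_mem_Icc hΓ hs k).1)
    (fun k => (iterate_hcR_mem_Icc hΓ hs k).2)
    ((summable_geometric_of_lt_one (hs.1.trans hs.2) (by linarith)).mul_right s)

lemma tsum_iterate_hcR_eq_add (hΓ : 0 < Γ) (hs : s ∈ Icc 0 (1 - Γ)) :
    ∑' k, (hcR Γ)^[k] s = s + ∑' k, (hcR Γ)^[k] (hcR Γ s) := by
  rw [(summable_iterate_hcR hΓ hs).tsum_eq_zero_add]
  simp only [iterate_zero_apply, iterate_succ_apply]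

lemma psiR_of_le (hs : s ≤ 1 - Γ) : psiR Γ s = ∑' k, (hcR Γ)^[k] s := if_pos hs

lemma psiR_of_lt (hs : 1 - Γ < s) : psiR Γ s = s := if_neg hs.not_ge

lemma psiR_zero (hΓ : Γ ≤ 1) : psiR Γ 0 = 0 := by
  simp [psiR_of_le (sub_nonneg.mpr hΓ), iterate_hcR_zero]

lemma psiR_of_one_sub_le (hΓ : Γ ≠ 0) (hs : 1 - Γ ≤ s) : psiR Γ s = s := by
  rcases hs.lt_or_eq with hs | rfl
  · exact psiR_of_lt hs
  rw [psiR_of_le le_rfl, tsum_eq_single 0 fun k hk => ?_, iterate_zero_apply]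
  obtain ⟨k, rfl⟩ := Nat.exists_eq_succ_of_ne_zero hk
  rw [iterate_succ_apply, hcR_one_sub_self hΓ, iterate_hcR_zero]

lemma psiR_sub_psiR_hpw (hΓ : 0 < Γ) (hΓ1 : Γ ≤ 1) (hs : 0 ≤ s) :
    psiR Γ s - psiR Γ (hpw Γ s) = s := by
  rcases le_or_gt s (1 - Γ) with hs1 | hs1
  · have hsI : s ∈ Icc 0 (1 - Γ) := ⟨hs, hs1⟩
    rw [hpw, if_pos hs1, psiR_of_le hs1, psiR_of_le ((mapsTo_hcR hΓ) hsI).2,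
      tsum_iterate_hcR_eq_add hΓ hsI, add_sub_cancel_right]
  · rw [hpw, if_neg hs1.not_ge, psiR_zero hΓ1, psiR_of_lt hs1, sub_zero]

lemma lipschitzOnWith_hcR (hΓ : 0 < Γ) :
    LipschitzOnWith (Γ⁻¹ - 1).toNNReal (hcR Γ) (Icc 0 (1 - Γ)) := by
  refine LipschitzOnWith.of_dist_le' fun s ⟨hs0, hs1⟩ t ⟨ht0, ht1⟩ => ?_
  have hp : 0 < (1 - s) * (1 - t) := by nlinarith
  have hp_low : Γ ^ 2 ≤ (1 - s) * (1 - t) := by nlinarith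
  have hp_up : (1 - s) * (1 - t) ≤ 1 := by nlinarith
  have hdiff : hcR Γ s - hcR Γ t = (s - t) * (1 - Γ / ((1 - s) * (1 - t))) := by
    have : 1 - s ≠ 0 := by linarith
    have : 1 - t ≠ 0 := by linarith
    unfold hcR
    field_simp
    ring
  have hlow : Γ ≤ Γ / ((1 - s) * (1 - t)) := le_div_self hΓ.le hp hp_up
  have hup : Γ / ((1 - s) * (1 - t)) ≤ Γ⁻¹ := by
    rw [div_le_iff₀ hp, inv_mul_eq_div, le_div_iff₀ hΓ]
    nlinarith
  have hΓ_add_inv : 2 ≤ Γ + Γ⁻¹ := by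
    have : Γ * Γ⁻¹ = 1 := mul_inv_cancel₀ hΓ.ne'
    nlinarith [sq_nonneg (Γ - 1), inv_pos.mpr hΓ]
  rw [Real.dist_eq, Real.dist_eq, hdiff, abs_mul, mul_comm]
  gcongr
  rw [abs_le]
  constructor <;> linarith

lemma lipschitzOnWith_tsum_iterate_hcR (hΓ : 1 / 2 < Γ) :
    ∃ K : ℝ≥0, LipschitzOnWith K (fun s => ∑' k, (hcR Γ)^[k] s) (Icc 0 (1 - Γ)) := by
  have hΓ0 : 0 < Γ := by linarith
  have hL : (Γ⁻¹ - 1).toNNReal < 1 := by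
    rw [Real.toNNReal_lt_one, sub_lt_iff_lt_add, inv_lt_comm₀ hΓ0 (by norm_num)]
    linarith
  exact ⟨_, LipschitzOnWith.tsum ((lipschitzOnWith_hcR hΓ0).iterate_of_mapsTo (mapsTo_hcR hΓ0))
    (NNReal.summable_geometric hL) fun s hs => summable_iterate_hcR hΓ0 hs⟩

lemma lipschitzOnWith_psiR (hΓ : 1 / 2 < Γ) (hΓ1 : Γ ≤ 1) :
    ∃ K : ℝ≥0, LipschitzOnWith K (psiR Γ) (Icc 0 1) := by
  have hΓ0 : 0 < Γ := by linarith
  obtain ⟨K, hK⟩ := lipschitzOnWith_tsum_iterate_hcR hΓ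
  have hleft : LipschitzOnWith K (psiR Γ) (Icc 0 (1 - Γ)) := fun s hs t ht => by
    simpa only [psiR_of_le hs.2, psiR_of_le ht.2] using hK hs ht
  have hright : LipschitzOnWith 1 (psiR Γ) (Icc (1 - Γ) 1) := fun s hs t ht => by
    simp [psiR_of_one_sub_le hΓ0.ne' hs.1, psiR_of_one_sub_le hΓ0.ne' ht.1]
  exact ⟨max K 1, (hleft.weaken (le_max_left _ _)).Icc_union_Icc
    (hright.weaken (le_max_right _ _)) (by linarith) (by linarith)⟩

end

theorem stmt11 (Γ : ℝ) (hΓ : Γ ∈ Set.Ico (1727 / 1728 : ℝ) 1) :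
    ContinuousOn (psiR Γ) (Set.Icc 0 1) ∧
    (∃ K : NNReal, LipschitzOnWith K (psiR Γ) (Set.Icc 0 1)) ∧
    (∀ s ∈ Set.Icc (0 : ℝ) 1, psiR Γ s - psiR Γ (hpw Γ s) = s) := by
  obtain ⟨hΓ_ge, hΓ_lt⟩ := hΓ
  have hΓ_half : 1 / 2 < Γ := by linarith
  obtain ⟨K, hK⟩ := lipschitzOnWith_psiR hΓ_half hΓ_lt.le
  exact ⟨hK.continuousOn, ⟨K, hK⟩,
    fun s hs => psiR_sub_psiR_hpw (by linarith) hΓ_lt.le hs.1⟩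
end
end

section
/- Let f ∈ L¹(ℝ³×ℝ³) vanish a.e. outside {|x| ≤ 1}, satisfy f∘Λ_t = f a.e. for every t ∈ ℝ where Λ_t(x,v) = (x cos t + v sin t, -x sin t + v cos t), and suppose ∫_{ℝ³} f(x,v) dv = (3/(4π))·1_{B̄₁(0)}(x) for a.e. x. Then for every test function φ ∈ C_c^∞(ℝ³×ℝ³), ∫∫ f(x,v)(v·∇_x φ(x,v) - x·∇_v φ(x,v)) dx dv = 0. -/
noncomputable section
open Real MeasureTheory
abbrev E3 := EuclideanSpace ℝ (Fin 3)
/-- The flow Λ_t of ẋ = v, v̇ = -x. -/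
def Lam (t : ℝ) (p : E3 × E3) : E3 × E3 :=
  (Real.cos t • p.1 + Real.sin t • p.2, -Real.sin t • p.1 + Real.cos t • p.2)

namespace Stmt17Aux

lemma Lam_add (t s : ℝ) (p : E3 × E3) : Lam t (Lam s p) = Lam (t + s) p := by
  simp only [Lam, Prod.mk.injEq, Real.cos_add, Real.sin_add]
  constructor <;> module

lemma Lam_zero (p : E3 × E3) : Lam 0 p = p := by
  simp [Lam]

/-- `Lam t` as a linear map. -/
def Lmap (t : ℝ) : (E3 × E3) →ₗ[ℝ] (E3 × E3) :=
  ((Real.cos t • LinearMap.fst ℝ E3 E3) + Real.sin t • LinearMap.snd ℝ E3 E3).prod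
    ((-Real.sin t) • LinearMap.fst ℝ E3 E3 + Real.cos t • LinearMap.snd ℝ E3 E3)

lemma Lmap_apply (t : ℝ) (p : E3 × E3) : Lmap t p = Lam t p := rfl

/-- the reflection (x, v) ↦ (x, -v) -/
def Cmap : (E3 × E3) →ₗ[ℝ] (E3 × E3) :=
  (LinearMap.fst ℝ E3 E3).prod (-LinearMap.snd ℝ E3 E3)

instance : (volume : Measure (E3 × E3)).IsAddHaarMeasure := by
  rw [MeasureTheory.Measure.volume_eq_prod]
  exact Measure.prod.instIsAddHaarMeasure volume volume

lemma Lmap_comp (t s : ℝ) : (Lmap t) ∘ₗ (Lmap s) = Lmap (t + s) := by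
  apply LinearMap.ext
  intro p
  rw [LinearMap.comp_apply, Lmap_apply, Lmap_apply, Lmap_apply, Lam_add]

lemma Lmap_zero : Lmap 0 = LinearMap.id := by
  ext p <;> simp [Lmap_apply, Lam]

lemma Cmap_comp : Cmap ∘ₗ Cmap = LinearMap.id := by
  ext p <;> simp [Cmap]

lemma Cmap_conj (t : ℝ) : Cmap ∘ₗ (Lmap t) ∘ₗ Cmap = Lmap (-t) := by
  ext p <;> simp [Cmap, Lmap, Lam, Real.cos_neg, Real.sin_neg] <;> module

lemma abs_det_Lmap (t : ℝ) : |LinearMap.det (Lmap t)| = 1 := by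
  have h1 : LinearMap.det (Lmap t) * LinearMap.det (Lmap (-t)) = 1 := by
    rw [← LinearMap.det_comp, Lmap_comp, add_neg_cancel, Lmap_zero, LinearMap.det_id]
  have hC : LinearMap.det Cmap * LinearMap.det Cmap = 1 := by
    rw [← LinearMap.det_comp, Cmap_comp, LinearMap.det_id]
  have h2 : LinearMap.det (Lmap (-t)) = LinearMap.det (Lmap t) := by
    rw [← Cmap_conj t, LinearMap.det_comp, LinearMap.det_comp]
    linear_combination (LinearMap.det (Lmap t)) * hC
  rw [h2] at h1
  rcases mul_self_eq_one_iff.1 h1 with h | h <;> rw [h] <;> norm_num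

lemma measurePreserving_Lam (t : ℝ) :
    MeasurePreserving (Lam t) (volume : Measure (E3 × E3)) volume := by
  have hcont : Continuous (Lam t) := by
    have := (Lmap t).continuous_of_finiteDimensional
    simpa [funext fun p => Lmap_apply t p] using this
  refine ⟨hcont.measurable, ?_⟩
  have hdet : LinearMap.det (Lmap t) ≠ 0 := by
    intro h
    have h2 := abs_det_Lmap t
    rw [h] at h2
    norm_num at h2
  have : Measure.map (Lmap t) (volume : Measure (E3 × E3)) =
      ENNReal.ofReal |(LinearMap.det (Lmap t))⁻¹| • volume :=
    Measure.map_linearMap_addHaar_eq_smul_addHaar volume hdet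
  have habs : |(LinearMap.det (Lmap t))⁻¹| = 1 := by
    rw [abs_inv, abs_det_Lmap]; norm_num
  have hfun : ⇑(Lmap t) = Lam t := funext fun p => Lmap_apply t p
  rw [hfun, habs] at this
  simpa using this

/-- `Lam t` as a linear equivalence. -/
def Lequiv (t : ℝ) : (E3 × E3) ≃ₗ[ℝ] (E3 × E3) :=
  LinearEquiv.ofLinear (Lmap t) (Lmap (-t))
    (by rw [Lmap_comp]; simpa using Lmap_zero)
    (by rw [Lmap_comp]; simpa using Lmap_zero)

lemma measurableEmbedding_Lam (t : ℝ) : MeasurableEmbedding (Lam t) := by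
  have h := ((Lequiv t).toContinuousLinearEquiv.toHomeomorph).measurableEmbedding
  have : ⇑(Lequiv t).toContinuousLinearEquiv.toHomeomorph = Lam t :=
    funext fun p => Lmap_apply t p
  rwa [this] at h

end Stmt17Aux

open Stmt17Aux

theorem stmt17 (f : E3 × E3 → ℝ) (hf : Integrable f)
    (hsupp : ∀ᵐ p : E3 × E3, 1 < ‖p.1‖ → f p = 0)
    (hinv : ∀ t : ℝ, ∀ᵐ p : E3 × E3, f (Lam t p) = f p)
    (hρ : ∀ᵐ x : E3, (∫ v : E3, f (x, v))
      = Set.indicator (Metric.closedBall (0 : E3) 1) (fun _ => 3 / (4 * π)) x) :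
    ∀ φ : E3 × E3 → ℝ, ContDiff ℝ (⊤ : ℕ∞) φ → HasCompactSupport φ →
      ∫ p : E3 × E3, f p * fderiv ℝ φ p (p.2, -p.1) = 0 := by
  intro φ hφ hφs
  set g : E3 × E3 → ℝ := fun q => fderiv ℝ φ q (q.2, -q.1) with hg
  -- continuity facts
  have hφc : Continuous φ := hφ.continuous
  have hDc : Continuous (fderiv ℝ φ) := hφ.continuous_fderiv (by simp)
  have hgc : Continuous g := hDc.clm_apply (continuous_snd.prodMk continuous_fst.neg)
  have hgsupp : HasCompactSupport g := by
    apply (hφs.fderiv ℝ).mono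
    intro q hq
    simp only [Function.mem_support] at hq ⊢
    intro h
    apply hq
    show (fderiv ℝ φ q) (q.2, -q.1) = 0
    rw [h]
    rfl
  obtain ⟨C, hC⟩ := hgsupp.exists_bound_of_continuous hgc
  have hLc : ∀ t, Continuous (Lam t) := by
    intro t
    have := (Lmap t).continuous_of_finiteDimensional
    simpa [funext fun p => Lmap_apply t p] using this
  -- the integral is constant in t
  have key : ∀ t : ℝ, (∫ p : E3 × E3, f p * φ (Lam t p)) = ∫ p : E3 × E3, f p * φ p := by
    intro t
    have h1 : (∫ p : E3 × E3, f p * φ (Lam t p)) = ∫ p : E3 × E3, f (Lam t p) * φ (Lam t p) := by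
      refine integral_congr_ae ?_
      filter_upwards [hinv t] with p hp
      rw [hp]
    rw [h1]
    exact (measurePreserving_Lam t).integral_comp (measurableEmbedding_Lam t)
      (fun q => f q * φ q)
  -- derivative of the (constant) integral at t = 0
  have hderiv : HasDerivAt (fun t : ℝ => ∫ p : E3 × E3, f p * φ (Lam t p))
      (∫ p : E3 × E3, f p * g (Lam 0 p)) 0 := by
    have hmain := hasDerivAt_integral_of_dominated_loc_of_deriv_le (F := fun t p => f p * φ (Lam t p))
      (F' := fun t p => f p * g (Lam t p)) (bound := fun p => ‖f p‖ * C)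
      (x₀ := (0 : ℝ)) (s := Metric.ball (0 : ℝ) 1) (Metric.ball_mem_nhds 0 one_pos)
      (Filter.Eventually.of_forall fun t =>
        hf.1.mul ((hφc.comp (hLc t)).aestronglyMeasurable))
      (by
        obtain ⟨Cφ, hCφ⟩ := hφs.exists_bound_of_continuous hφc
        have h := hf.bdd_mul ((hφc.comp (hLc 0)).aestronglyMeasurable)
          (Filter.Eventually.of_forall fun p => hCφ (Lam 0 p))
        exact h.congr (Filter.Eventually.of_forall fun p => mul_comm _ _))
      (hf.1.mul ((hgc.comp (hLc 0)).aestronglyMeasurable))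
      (Filter.Eventually.of_forall fun p => by
        intro t _
        calc ‖f p * g (Lam t p)‖ = ‖f p‖ * ‖g (Lam t p)‖ := by rw [norm_mul]
        _ ≤ ‖f p‖ * C := mul_le_mul_of_nonneg_left (hC _) (norm_nonneg _))
      (hf.norm.mul_const C)
      (Filter.Eventually.of_forall fun p => by
        intro t _
        have hΛ : HasDerivAt (fun s : ℝ => Lam s p) ((Lam t p).2, -(Lam t p).1) t := by
          have h1 : HasDerivAt (fun s : ℝ => Real.cos s • p.1 + Real.sin s • p.2)
              ((-Real.sin t) • p.1 + Real.cos t • p.2) t :=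
            (((Real.hasDerivAt_cos t).smul_const p.1).add
              ((Real.hasDerivAt_sin t).smul_const p.2))
          have h2 : HasDerivAt (fun s : ℝ => -Real.sin s • p.1 + Real.cos s • p.2)
              ((-Real.cos t) • p.1 + (-Real.sin t) • p.2) t := by
            exact (((Real.hasDerivAt_sin t).neg.smul_const p.1).add
              (((Real.hasDerivAt_cos t).smul_const p.2)))
          have := h1.prodMk h2
          convert this using 1
          simp only [Lam, Prod.mk.injEq]
          refine Prod.ext ?_ ?_ <;> unfold Lam <;> dsimp only <;> module
        have hfd : HasFDerivAt φ (fderiv ℝ φ (Lam t p)) (Lam t p) :=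
          (hφ.differentiable (by simp) (Lam t p)).hasFDerivAt
        have := hfd.comp_hasDerivAt t hΛ
        exact (this.const_mul (f p)))
    exact hmain.2
  -- the integral is constant, hence its derivative vanishes
  have hconst : HasDerivAt (fun t : ℝ => ∫ p : E3 × E3, f p * φ (Lam t p)) 0 0 := by
    have heq : (fun t : ℝ => ∫ p : E3 × E3, f p * φ (Lam t p))
        = fun _ : ℝ => ∫ p : E3 × E3, f p * φ p := funext key
    rw [heq]
    exact hasDerivAt_const 0 _
  have hzero : (∫ p : E3 × E3, f p * g (Lam 0 p)) = 0 := hderiv.unique hconst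
  have : (∫ p : E3 × E3, f p * g p) = 0 := by
    simpa [Lam_zero] using hzero
  simpa [hg] using this
end
end
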